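/- arXiv:1109.5760 — 3 statements merged into one kernel-verified Lean document; each statement's English description precedes it below -/
import Mathlib

section
/- Let 0 → L → M → N → 0 be a short exact sequence of graded A-modules with M generated in degree s. Then L is generated in degree s if and only if JM ∩ L = JL, where J = ⊕_{i≥1} A_i. -/
open DirectSum CategoryTheory

namespace GenK

variable (k A : Type) [Field k] [Ring A] [Algebra k A] (𝒜 : ℕ → Submodule k A)

/-- The ideal `J = ⊕_{i ≥ 1} A_i`, as the left ideal generated by the
positive-degree homogeneous components. -/
noncomputable def Jideal : Ideal A :=
  Submodule.span A (⋃ i : ℕ, ((𝒜 (i + 1) : Submodule k A) : Set A))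

/-- A locally finite graded module over the graded algebra `A = ⊕ 𝒜 i`. -/
structure GMod [GradedAlgebra 𝒜] where
  M : Type
  [acg : AddCommGroup M]
  [modA : Module A M]
  [modk : Module k M]
  [tower : IsScalarTower k A M]
  gr : ℕ → Submodule k M
  [decomp : DirectSum.Decomposition gr]
  [gsmul : SetLike.GradedSMul 𝒜 gr]
  locFin : ∀ i, FiniteDimensional k (gr i)

attribute [instance] GMod.acg GMod.modA GMod.modk GMod.tower GMod.decomp GMod.gsmul

variable {k A 𝒜} [GradedAlgebra 𝒜]

/-- A graded module is generated in degree `s` if `M = A · M_s`. -/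
def GMod.gen (N : GMod k A 𝒜) (s : ℕ) : Prop :=
  Submodule.span A ((N.gr s : Submodule k N.M) : Set N.M) = ⊤

instance (N : GMod k A 𝒜) (i : ℕ) : SMul (𝒜 0) (N.gr i) :=
  ⟨fun a m => ⟨(a : A) • (m : N.M), by
    have h := SetLike.GradedSMul.smul_mem (A := 𝒜) (B := N.gr) a.2 m.2
    simpa using h⟩⟩

@[simp] lemma GMod.smul_coe (N : GMod k A 𝒜) (i : ℕ) (a : 𝒜 0) (m : N.gr i) :
    ((a • m : N.gr i) : N.M) = (a : A) • (m : N.M) := rfl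

/-- The degree `i` component of a graded module is a module over `A₀ = 𝒜 0`. -/
instance (N : GMod k A 𝒜) (i : ℕ) : Module (𝒜 0) (N.gr i) where
  one_smul m := Subtype.ext (by simp)
  mul_smul a b m := Subtype.ext (by simp [mul_smul])
  smul_zero a := Subtype.ext (by simp)
  smul_add a m n := Subtype.ext (by simp)
  add_smul a b m := Subtype.ext (by simp [add_smul])
  zero_smul m := Subtype.ext (by simp)

/-- A tower of minimal graded projective covers computing the graded syzygies
`N i = Ω^i(M₀)`, with `P i` a graded projective cover of `N i`. -/
structure SyzTower (M₀ : GMod k A 𝒜) where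
  N : ℕ → GMod k A 𝒜
  zero : N 0 = M₀
  P : ℕ → GMod k A 𝒜
  proj : ∀ i, Module.Projective A (P i).M
  p : ∀ i, (P i).M →ₗ[A] (N i).M
  surj : ∀ i, Function.Surjective (p i)
  graded : ∀ i j, ∀ x ∈ (P i).gr j, p i x ∈ (N i).gr j
  small : ∀ i (Q : Submodule A (P i).M), Q ⊔ LinearMap.ker (p i) = ⊤ → Q = ⊤
  ι : ∀ i, (N (i + 1)).M →ₗ[A] (P i).M
  inj : ∀ i, Function.Injective (ι i)
  rng : ∀ i, LinearMap.range (ι i) = LinearMap.ker (p i)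
  gr_eq : ∀ i j, (N (i + 1)).gr j = ((P i).gr j).comap ((ι i).restrictScalars k)

/-- `M` is a Koszul module: it is generated in degree 0 and has a (minimal) graded
projective resolution whose `i`-th term is generated in degree `i`. -/
def IsKoszul (M₀ : GMod k A 𝒜) : Prop :=
  M₀.gen 0 ∧ ∃ T : SyzTower M₀, ∀ i, (T.P i).gen i

end GenK

/-- A morphism of graded modules (degree-preserving `A`-linear map). -/
def GenK.IsGradedMap {k A : Type} [Field k] [Ring A] [Algebra k A]
    {𝒜 : ℕ → Submodule k A} [GradedAlgebra 𝒜] {L M : GenK.GMod k A 𝒜}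
    (f : L.M →ₗ[A] M.M) : Prop :=
  ∀ i, ∀ x ∈ L.gr i, f x ∈ M.gr i

/-!
A graded module `X` generated in degree `s` vanishes below degree `s` and satisfies `X_j ⊆ JX`
for `j > s`. The degree-`j` component of an element of `JX` lies in the submodule generated by
`X_{<j}`, so by induction on the degree (graded Nakayama) these two properties conversely force
`X` to be generated in degree `s`. For `L ⊆ M` with `L` generated in degree `s`, an element of
`L ∩ JM` has no component in degree `s` (it would lie in `M_{<s} = 0`) and its higher components
lie in `JL`; if instead `JM ∩ L = JL`, then `L_j ⊆ JM ∩ L = JL` for `j > s`.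
-/

namespace GenK

variable {k A : Type} [Field k] [Ring A] [Algebra k A] {𝒜 : ℕ → Submodule k A}

lemma mem_Jideal_of_mem {d : ℕ} {c : A} (hc : c ∈ 𝒜 d) (hd : 0 < d) : c ∈ Jideal k A 𝒜 :=
  Submodule.subset_span <| Set.mem_iUnion.2 ⟨d - 1, by rwa [Nat.sub_add_cancel hd]⟩

variable [GradedAlgebra 𝒜]

namespace GMod

variable (X : GMod k A 𝒜)

noncomputable def proj (j : ℕ) : X.M →+ X.M where
  toFun x := (decompose X.gr x j : X.M)
  map_zero' := by simp
  map_add' x y := by simp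

lemma proj_of_mem {j : ℕ} {x : X.M} (hx : x ∈ X.gr j) : X.proj j x = x :=
  decompose_of_mem_same X.gr hx

lemma proj_of_mem_of_ne {i j : ℕ} {x : X.M} (hx : x ∈ X.gr i) (h : i ≠ j) : X.proj j x = 0 :=
  decompose_of_mem_ne X.gr hx h

lemma proj_mem (j : ℕ) (x : X.M) : X.proj j x ∈ X.gr j :=
  (decompose X.gr x j).2

lemma mem_of_forall_proj_mem {P : Submodule A X.M} {x : X.M} (h : ∀ j, X.proj j x ∈ P) :
    x ∈ P := by
  classical
  rw [← sum_support_decompose X.gr x]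
  exact P.sum_mem fun j _ => h j

lemma proj_smul_of_mem {d : ℕ} {c : A} (hc : c ∈ 𝒜 d) (m : X.M) (j : ℕ) :
    X.proj j (c • m) = if d ≤ j then c • X.proj (j - d) m else 0 := by
  induction m using DirectSum.Decomposition.inductionOn X.gr with
  | zero => simp
  | @homogeneous e m =>
    have hcm : c • (m : X.M) ∈ X.gr (d + e) := SetLike.GradedSMul.smul_mem hc m.2
    by_cases hj : d + e = j
    · subst hj
      rw [X.proj_of_mem hcm, if_pos (Nat.le_add_right d e), Nat.add_sub_cancel_left,
        X.proj_of_mem m.2]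
    · rw [X.proj_of_mem_of_ne hcm hj]
      split_ifs with hd
      · rw [X.proj_of_mem_of_ne m.2 (by omega), smul_zero]
      · rfl
  | add x y hx hy =>
    rw [smul_add, map_add, hx, hy, map_add]
    split_ifs <;> simp [smul_add]

def componentwise (T : ℕ → Submodule A X.M)
    (hT : ∀ {d i : ℕ} {c : A} {m : X.M}, c ∈ 𝒜 d → m ∈ T i → c • m ∈ T (i + d)) :
    Submodule A X.M where
  carrier := {z | ∀ j, X.proj j z ∈ T j}
  add_mem' hx hy j := by
    rw [map_add]
    exact (T j).add_mem (hx j) (hy j)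
  zero_mem' j := by
    rw [map_zero]
    exact (T j).zero_mem
  smul_mem' b z hz j := by
    classical
    rw [← sum_support_decompose 𝒜 b, Finset.sum_smul, map_sum]
    refine (T j).sum_mem fun d _ => ?_
    rw [X.proj_smul_of_mem (decompose 𝒜 b d).2]
    split_ifs with hd
    · simpa only [Nat.sub_add_cancel hd] using hT (decompose 𝒜 b d).2 (hz (j - d))
    · exact (T j).zero_mem

lemma proj_mem_of_gen {s : ℕ} (hX : X.gen s) (T : ℕ → Submodule A X.M)
    (hT : ∀ {d i : ℕ} {c : A} {m : X.M}, c ∈ 𝒜 d → m ∈ T i → c • m ∈ T (i + d))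
    (hs : (X.gr s : Set X.M) ⊆ T s) (x : X.M) (j : ℕ) : X.proj j x ∈ T j := by
  have hspan : Submodule.span A (X.gr s : Set X.M) ≤ X.componentwise T hT := by
    refine Submodule.span_le.2 fun m hm j => ?_
    by_cases hjs : s = j
    · subst hjs
      rw [X.proj_of_mem hm]
      exact hs hm
    · rw [X.proj_of_mem_of_ne hm hjs]
      exact zero_mem _
  exact hspan (hX.symm ▸ Submodule.mem_top) j

lemma proj_eq_zero_of_lt {s : ℕ} (hX : X.gen s) (x : X.M) {j : ℕ} (hj : j < s) :
    X.proj j x = 0 := by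
  let T : ℕ → Submodule A X.M := fun j => if j < s then ⊥ else ⊤
  have hT : ∀ {d i : ℕ} {c : A} {m : X.M}, c ∈ 𝒜 d → m ∈ T i → c • m ∈ T (i + d) := by
    intro d i c m _ hm
    by_cases hi : i + d < s
    · simp only [T, if_pos (show i < s by omega), Submodule.mem_bot] at hm
      rw [hm, smul_zero]
      exact zero_mem _
    · simp [T, hi]
  simpa [T, hj] using X.proj_mem_of_gen hX T hT (by simp [T]) x j

lemma eq_zero_of_mem_gr_of_lt {s j : ℕ} (hX : X.gen s) (hj : j < s) {x : X.M}
    (hx : x ∈ X.gr j) : x = 0 :=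
  X.proj_of_mem hx ▸ X.proj_eq_zero_of_lt hX x hj

lemma proj_mem_smul_top_of_lt {s : ℕ} (hX : X.gen s) (x : X.M) {j : ℕ} (hj : s < j) :
    X.proj j x ∈ Jideal k A 𝒜 • (⊤ : Submodule A X.M) := by
  let T : ℕ → Submodule A X.M := fun j => if s < j then Jideal k A 𝒜 • ⊤ else ⊤
  have hT : ∀ {d i : ℕ} {c : A} {m : X.M}, c ∈ 𝒜 d → m ∈ T i → c • m ∈ T (i + d) := by
    intro d i c m hc hm
    by_cases hi : s < i + d
    · simp only [T, if_pos hi]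
      rcases Nat.eq_zero_or_pos d with rfl | hd
      · simp only [T, if_pos (show s < i from hi)] at hm
        exact Submodule.smul_mem _ c hm
      · exact Submodule.smul_mem_smul (mem_Jideal_of_mem hc hd) Submodule.mem_top
    · simp [T, hi]
  simpa [T, hj] using X.proj_mem_of_gen hX T hT (by simp [T]) x j

def spanBelow (j : ℕ) : Submodule A X.M :=
  Submodule.span A (⋃ e < j, (X.gr e : Set X.M))

lemma spanBelow_mono : Monotone X.spanBelow := fun _ _ hij =>
  Submodule.span_mono <| Set.biUnion_subset_biUnion_left fun _ he => lt_of_lt_of_le he hij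

lemma spanBelow_eq_bot {s j : ℕ} (hX : X.gen s) (hj : j ≤ s) : X.spanBelow j = ⊥ := by
  refine Submodule.span_eq_bot.2 fun x hx => ?_
  obtain ⟨e, he, hxe⟩ := Set.mem_iUnion₂.1 hx
  exact X.eq_zero_of_mem_gr_of_lt hX (lt_of_lt_of_le he hj) hxe

lemma proj_mem_spanBelow_of_mem_smul_top {z : X.M}
    (hz : z ∈ Jideal k A 𝒜 • (⊤ : Submodule A X.M)) (j : ℕ) : X.proj j z ∈ X.spanBelow j := by
  have hT : ∀ {d i : ℕ} {c : A} {m : X.M}, c ∈ 𝒜 d → m ∈ X.spanBelow i →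
      c • m ∈ X.spanBelow (i + d) := fun _ hm =>
    X.spanBelow_mono (Nat.le_add_right _ _) (Submodule.smul_mem _ _ hm)
  suffices Jideal k A 𝒜 • (⊤ : Submodule A X.M) ≤ X.componentwise X.spanBelow hT from this hz j
  refine Submodule.smul_le.2 fun r hr n _ => ?_
  induction hr using Submodule.span_induction with
  | mem c hc =>
    obtain ⟨i, hc⟩ := Set.mem_iUnion.1 hc
    intro j
    rw [X.proj_smul_of_mem hc]
    split_ifs with hij
    · exact Submodule.smul_mem _ _ <| Submodule.subset_span <|
        Set.mem_biUnion (show j - (i + 1) < j by omega) (X.proj_mem _ n)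
    · exact zero_mem _
  | zero => rw [zero_smul]; exact zero_mem _
  | add a b _ _ ha hb => rw [add_smul]; exact add_mem ha hb
  | smul b a _ ha => rw [smul_eq_mul, mul_smul]; exact Submodule.smul_mem _ b ha

lemma gen_of_forall_mem_smul_top {s : ℕ} (h_lt : ∀ j < s, ∀ x ∈ X.gr j, x = 0)
    (h_gt : ∀ j, s < j → ∀ x ∈ X.gr j, x ∈ Jideal k A 𝒜 • (⊤ : Submodule A X.M)) :
    X.gen s := by
  have hgr : ∀ j, ∀ x ∈ X.gr j, x ∈ Submodule.span A (X.gr s : Set X.M) := by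
    intro j
    induction j using Nat.strong_induction_on with
    | _ j ih =>
      intro x hx
      rcases lt_trichotomy j s with hj | rfl | hj
      · rw [h_lt j hj x hx]
        exact zero_mem _
      · exact Submodule.subset_span hx
      · have hbelow : X.spanBelow j ≤ Submodule.span A (X.gr s : Set X.M) :=
          Submodule.span_le.2 <| Set.iUnion₂_subset ih
        exact hbelow (X.proj_of_mem hx ▸ X.proj_mem_spanBelow_of_mem_smul_top (h_gt j hj x hx) j)
  exact eq_top_iff.2 fun x _ => X.mem_of_forall_proj_mem fun j => hgr j _ (X.proj_mem j x)

end GMod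

lemma IsGradedMap.map_proj {L M : GMod k A 𝒜} {f : L.M →ₗ[A] M.M} (hf : IsGradedMap f)
    (y : L.M) (j : ℕ) : f (L.proj j y) = M.proj j (f y) := by
  induction y using DirectSum.Decomposition.inductionOn L.gr with
  | zero => simp
  | @homogeneous e m =>
    by_cases hj : e = j
    · subst hj
      rw [L.proj_of_mem m.2, M.proj_of_mem (hf e m m.2)]
    · rw [L.proj_of_mem_of_ne m.2 hj, M.proj_of_mem_of_ne (hf e m m.2) hj, map_zero]
  | add x y hx hy => rw [map_add, map_add, map_add, hx, hy, map_add]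

lemma IsGradedMap.mem_smul_top_of_map_mem_smul_top {L M : GMod k A 𝒜} {f : L.M →ₗ[A] M.M}
    (hf : IsGradedMap f) (hinj : Function.Injective f) {s : ℕ} (hL : L.gen s) (hM : M.gen s)
    {y : L.M} (hy : f y ∈ Jideal k A 𝒜 • (⊤ : Submodule A M.M)) :
    y ∈ Jideal k A 𝒜 • (⊤ : Submodule A L.M) := by
  refine L.mem_of_forall_proj_mem fun j => ?_
  rcases lt_trichotomy j s with hj | rfl | hj
  · rw [L.proj_eq_zero_of_lt hL y hj]
    exact zero_mem _
  · have hyj := M.proj_mem_spanBelow_of_mem_smul_top hy j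
    rw [M.spanBelow_eq_bot hM le_rfl, Submodule.mem_bot, ← hf.map_proj] at hyj
    rw [(injective_iff_map_eq_zero f).1 hinj _ hyj]
    exact zero_mem _
  · exact L.proj_mem_smul_top_of_lt hL y hj

end GenK

open GenK in
theorem stmt3_general (k A : Type) [Field k] [Ring A] [Algebra k A] (𝒜 : ℕ → Submodule k A)
    [GradedAlgebra 𝒜]
    (L M : GMod k A 𝒜) (f : L.M →ₗ[A] M.M)
    (hf : IsGradedMap f)
    (hinj : Function.Injective f)
    (s : ℕ) (hM : M.gen s) :
    L.gen s ↔
      (Jideal k A 𝒜 • (⊤ : Submodule A M.M)) ⊓ LinearMap.range f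
        = Submodule.map f (Jideal k A 𝒜 • (⊤ : Submodule A L.M)) := by
  constructor
  · intro hL
    refine le_antisymm ?_ ?_
    · rintro _ ⟨hyJ, y, rfl⟩
      exact Submodule.mem_map_of_mem (hf.mem_smul_top_of_map_mem_smul_top hinj hL hM hyJ)
    · rw [Submodule.map_smul'', Submodule.map_top]
      exact le_inf (Submodule.smul_mono le_rfl le_top) Submodule.smul_le_right
  · intro hJ
    refine L.gen_of_forall_mem_smul_top (fun j hj x hx => ?_) (fun j hj x hx => ?_)
    · exact (injective_iff_map_eq_zero f).1 hinj x (M.eq_zero_of_mem_gr_of_lt hM hj (hf j x hx))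
    · have hfx : f x ∈ (Jideal k A 𝒜 • (⊤ : Submodule A M.M)) ⊓ LinearMap.range f :=
        ⟨M.proj_of_mem (hf j x hx) ▸ M.proj_mem_smul_top_of_lt hM (f x) hj, x, rfl⟩
      obtain ⟨y, hy, hyx⟩ := hJ ▸ hfx
      exact hinj hyx ▸ hy

open GenK in
/-- in a short exact sequence `0 → L → M → N → 0` of graded `A`-modules
with `M` generated in degree `s`, the module `L` is generated in degree `s`
if and only if `JM ∩ L = JL` (`L` being identified with its image in `M`). -/
theorem stmt3 (k A : Type) [Field k] [Ring A] [Algebra k A] (𝒜 : ℕ → Submodule k A)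
    [GradedAlgebra 𝒜]
    (hloc : ∀ i, FiniteDimensional k (𝒜 i))
    (hgen01 : ∀ i j, 𝒜 i * 𝒜 j = 𝒜 (i + j))
    (L M N : GMod k A 𝒜) (f : L.M →ₗ[A] M.M) (g : M.M →ₗ[A] N.M)
    (hf : IsGradedMap f) (hg : IsGradedMap g)
    (hinj : Function.Injective f) (hsurj : Function.Surjective g)
    (hexact : LinearMap.range f = LinearMap.ker g)
    (s : ℕ) (hM : M.gen s) :
    L.gen s ↔
      (Jideal k A 𝒜 • (⊤ : Submodule A M.M)) ⊓ LinearMap.range f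
        = Submodule.map f (Jideal k A 𝒜 • (⊤ : Submodule A L.M)) :=
  stmt3_general k A 𝒜 L M f hf hinj s hM
end

section
/- Suppose each graded A-module in the short exact sequence 0 → L → M → N → 0 is generated in degree 0. Then J^i M ∩ L = J^i L for all i ≥ 0, where J = ⊕_{i≥1} A_i. -/
open DirectSum CategoryTheory

/-!
Write `X_{≥ i}` for the elements of a graded module `X` with no components in degrees below `i`.
Since `J` lies in positive degrees, `J^i X ⊆ X_{≥ i}` for every `X`. Conversely, if `X = A · X₀` and
`A_{d+1} ⊆ A_d A_1`, then every `x ∈ X_d` is a combination `∑ (a_j)_d m_j` with `m_j ∈ X₀` and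
`(a_j)_d ∈ A_d ⊆ J^d`, so `X_{≥ i} = J^i X`. For `L ⊆ M` graded, `M_{≥ i} ∩ L = L_{≥ i}`, whence
`J^i M ∩ L = J^i L` as soon as `L` is generated in degree `0`.
-/

namespace DirectSum

variable {ι M N σ τ : Type*} [DecidableEq ι] [AddCommMonoid M] [AddCommMonoid N]
  [SetLike σ M] [AddSubmonoidClass σ M] [SetLike τ N] [AddSubmonoidClass τ N]

theorem coe_decompose_map_of_mem (ℳ : ι → σ) (𝒩 : ι → τ) [Decomposition ℳ] [Decomposition 𝒩]
    (φ : M →+ N) (hφ : ∀ i, ∀ x ∈ ℳ i, φ x ∈ 𝒩 i) (x : M) (i : ι) :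
    (decompose 𝒩 (φ x) i : N) = φ (decompose ℳ x i) := by
  induction x using Decomposition.inductionOn ℳ with
  | zero => simp
  | @homogeneous j x =>
    by_cases hji : j = i
    · subst hji
      rw [decompose_of_mem_same 𝒩 (hφ j x x.2), decompose_coe, of_eq_same]
    · rw [decompose_of_mem_ne 𝒩 (hφ j x x.2) hji, decompose_coe, of_eq_of_ne _ _ _ (Ne.symm hji),
        ZeroMemClass.coe_zero, map_zero]
  | add x y hx hy => simp [hx, hy]

end DirectSum

namespace GenK

open DirectSum

variable {k A : Type} [Field k] [Ring A] [Algebra k A] {𝒜 : ℕ → Submodule k A}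

theorem mem_Jideal_pow_of_mem (h𝒜 : ∀ d, 𝒜 (d + 1) ≤ 𝒜 d * 𝒜 1) {d : ℕ} {a : A}
    (ha : a ∈ 𝒜 d) : a ∈ Jideal k A 𝒜 ^ d := by
  induction d generalizing a with
  | zero => rw [Submodule.pow_zero, Ideal.one_eq_top]; exact Submodule.mem_top
  | succ d ih =>
    refine Submodule.mul_induction_on (h𝒜 d ha) (fun b hb c hc => ?_) fun _ _ => add_mem
    rw [Submodule.pow_succ]
    exact Ideal.mul_mem_mul (ih hb) (Submodule.subset_span (Set.mem_iUnion.2 ⟨0, hc⟩))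

variable [GradedAlgebra 𝒜]

theorem IsGradedMap.coe_decompose_apply {L M : GMod k A 𝒜} {f : L.M →ₗ[A] M.M}
    (hf : IsGradedMap f) (x : L.M) (d : ℕ) :
    (decompose M.gr (f x) d : M.M) = f (decompose L.gr x d) :=
  coe_decompose_map_of_mem L.gr M.gr f.toAddMonoidHom hf x d

theorem GMod.coe_decompose_smul_of_mem_zero (X : GMod k A 𝒜) {m : X.M} (hm : m ∈ X.gr 0)
    (a : A) (d : ℕ) : (decompose X.gr (a • m) d : X.M) = (decompose 𝒜 a d : A) • m :=
  coe_decompose_map_of_mem 𝒜 X.gr (LinearMap.toSpanSingleton A X.M m).toAddMonoidHom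
    (fun e _ ha => by simpa using SetLike.GradedSMul.smul_mem (A := 𝒜) (B := X.gr) ha hm) a d

def GMod.degGE (X : GMod k A 𝒜) (i : ℕ) : AddSubmonoid X.M where
  carrier := {x | ∀ d < i, (decompose X.gr x d : X.M) = 0}
  zero_mem' _ _ := by simp
  add_mem' hx hy d hd := by simp [hx d hd, hy d hd]

namespace GMod

variable {X : GMod k A 𝒜}

theorem mem_degGE_of_mem_gr {i d : ℕ} (hid : i ≤ d) {x : X.M} (hx : x ∈ X.gr d) :
    x ∈ X.degGE i :=
  fun _ he => decompose_of_mem_ne X.gr hx (by omega)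

theorem degGE_antitone : Antitone X.degGE :=
  fun _ _ hij _ hx d hd => hx d (hd.trans_le hij)

@[elab_as_elim]
theorem degGE_induction {i : ℕ} {P : X.M → Prop} {x : X.M} (hx : x ∈ X.degGE i)
    (gr : ∀ d, i ≤ d → ∀ x ∈ X.gr d, P x) (zero : P 0)
    (add : ∀ x y, P x → P y → P (x + y)) : P x := by
  classical
  rw [← sum_support_decompose X.gr x]
  refine Finset.sum_induction _ P add zero fun d hd => gr d ?_ _ (SetLike.coe_mem _)
  by_contra hdi
  exact DFinsupp.mem_support_iff.1 hd (Subtype.ext (hx d (by omega)))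

theorem smul_mem_degGE_add {a : A} {e j : ℕ} (ha : a ∈ 𝒜 e) {x : X.M} (hx : x ∈ X.degGE j) :
    a • x ∈ X.degGE (e + j) := by
  refine degGE_induction hx (fun d hjd y hy => ?_) (by simp) fun y z hy hz => ?_
  · have hay : a • y ∈ X.gr (e + d) := SetLike.GradedSMul.smul_mem ha hy
    exact mem_degGE_of_mem_gr (by omega) hay
  · simpa [smul_add] using add_mem hy hz

theorem smul_mem_degGE (a : A) {j : ℕ} {x : X.M} (hx : x ∈ X.degGE j) : a • x ∈ X.degGE j := by
  induction a using Decomposition.inductionOn 𝒜 with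
  | zero => simp
  | add a b ha hb => simpa [add_smul] using add_mem ha hb
  | @homogeneous e a => exact degGE_antitone (by omega) (smul_mem_degGE_add a.2 hx)

theorem smul_mem_degGE_succ_of_mem_Jideal {r : A} (hr : r ∈ Jideal k A 𝒜) {j : ℕ} {x : X.M}
    (hx : x ∈ X.degGE j) : r • x ∈ X.degGE (j + 1) := by
  induction hr using Submodule.span_induction with
  | mem r hr =>
    obtain ⟨e, hr⟩ := Set.mem_iUnion.1 hr
    exact degGE_antitone (by omega) (smul_mem_degGE_add hr hx)
  | zero => simp
  | add r s _ _ hr hs => simpa [add_smul] using add_mem hr hs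
  | smul a r _ hr => simpa [mul_smul] using smul_mem_degGE a hr

theorem smul_mem_degGE_add_of_mem_Jideal_pow {i : ℕ} {r : A} (hr : r ∈ Jideal k A 𝒜 ^ i)
    {j : ℕ} {x : X.M} (hx : x ∈ X.degGE j) : r • x ∈ X.degGE (i + j) := by
  induction i generalizing r x j with
  | zero => simpa using smul_mem_degGE r hx
  | succ i ih =>
    rw [Submodule.pow_succ] at hr
    refine Submodule.mul_induction_on hr (fun r hr s hs => ?_) fun r s hr hs => ?_
    · rw [mul_smul, show i + 1 + j = i + (j + 1) by omega]
      exact ih hr (smul_mem_degGE_succ_of_mem_Jideal hs hx)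
    · simpa [add_smul] using add_mem hr hs

theorem mem_degGE_of_mem_Jideal_pow_smul_top {i : ℕ} {x : X.M}
    (hx : x ∈ Jideal k A 𝒜 ^ i • (⊤ : Submodule A X.M)) : x ∈ X.degGE i := by
  refine Submodule.smul_induction_on hx (fun r hr m _ => ?_) fun _ _ => add_mem
  have hm : m ∈ X.degGE 0 := fun d hd => absurd hd d.not_lt_zero
  simpa using smul_mem_degGE_add_of_mem_Jideal_pow hr hm

theorem mem_Jideal_pow_smul_top_of_mem_gr (hX : X.gen 0) (h𝒜 : ∀ d, 𝒜 (d + 1) ≤ 𝒜 d * 𝒜 1)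
    {d : ℕ} {x : X.M} (hx : x ∈ X.gr d) : x ∈ Jideal k A 𝒜 ^ d • (⊤ : Submodule A X.M) := by
  have hx₀ : x ∈ Submodule.span A (X.gr 0 : Set X.M) := hX ▸ Submodule.mem_top
  obtain ⟨n, c, m, hcm⟩ := Submodule.mem_span_set'.1 hx₀
  have hx_eq : x = ∑ j, (decompose 𝒜 (c j) d : A) • (m j : X.M) := by
    rw [← decompose_of_mem_same X.gr hx, ← hcm, decompose_sum, DFinsupp.finsetSum_apply,
      AddSubmonoidClass.coe_finsetSum]
    exact Finset.sum_congr rfl fun j _ => X.coe_decompose_smul_of_mem_zero (m j).2 (c j) d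
  rw [hx_eq]
  exact sum_mem fun j _ =>
    Submodule.smul_mem_smul (mem_Jideal_pow_of_mem h𝒜 (SetLike.coe_mem _)) Submodule.mem_top

theorem mem_Jideal_pow_smul_top_iff (hX : X.gen 0) (h𝒜 : ∀ d, 𝒜 (d + 1) ≤ 𝒜 d * 𝒜 1)
    {i : ℕ} {x : X.M} : x ∈ Jideal k A 𝒜 ^ i • (⊤ : Submodule A X.M) ↔ x ∈ X.degGE i := by
  refine ⟨mem_degGE_of_mem_Jideal_pow_smul_top, fun hx => ?_⟩
  refine degGE_induction hx (fun d hid y hy => ?_) (zero_mem _) fun _ _ => add_mem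
  exact Submodule.smul_mono_left (Ideal.pow_le_pow_right hid)
    (mem_Jideal_pow_smul_top_of_mem_gr hX h𝒜 hy)

end GMod

theorem IsGradedMap.mem_degGE_of_apply_mem {L M : GMod k A 𝒜} {f : L.M →ₗ[A] M.M}
    (hf : IsGradedMap f) (hinj : Function.Injective f) {i : ℕ} {x : L.M}
    (hx : f x ∈ M.degGE i) : x ∈ L.degGE i := fun d hd =>
  (map_eq_zero_iff f hinj).1 (hf.coe_decompose_apply x d ▸ hx d hd)

end GenK

open GenK in
theorem stmt4_general (k A : Type) [Field k] [Ring A] [Algebra k A] (𝒜 : ℕ → Submodule k A)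
    [GradedAlgebra 𝒜]
    (hgen01 : ∀ i j, 𝒜 i * 𝒜 j = 𝒜 (i + j))
    (L M : GMod k A 𝒜) (f : L.M →ₗ[A] M.M)
    (hf : IsGradedMap f)
    (hinj : Function.Injective f)
    (hL : L.gen 0) :
    ∀ i : ℕ,
      ((Jideal k A 𝒜) ^ i • (⊤ : Submodule A M.M)) ⊓ LinearMap.range f
        = Submodule.map f ((Jideal k A 𝒜) ^ i • (⊤ : Submodule A L.M)) := by
  intro i
  apply le_antisymm
  · rintro _ ⟨hJ, x, rfl⟩
    have hx : x ∈ L.degGE i :=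
      hf.mem_degGE_of_apply_mem hinj (GMod.mem_degGE_of_mem_Jideal_pow_smul_top hJ)
    exact ⟨x, (GMod.mem_Jideal_pow_smul_top_iff hL fun d => (hgen01 d 1).ge).2 hx, rfl⟩
  · exact le_inf ((Submodule.map_smul'' _ _ f).trans_le (smul_mono_right _ le_top))
      LinearMap.map_le_range

open GenK in
/-- if all three graded modules in a short exact sequence
`0 → L → M → N → 0` are generated in degree `0`, then `J^i M ∩ L = J^i L`
for all `i ≥ 0` (identifying `L` with its image in `M`). -/
theorem stmt4 (k A : Type) [Field k] [Ring A] [Algebra k A] (𝒜 : ℕ → Submodule k A)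
    [GradedAlgebra 𝒜]
    (hloc : ∀ i, FiniteDimensional k (𝒜 i))
    (hgen01 : ∀ i j, 𝒜 i * 𝒜 j = 𝒜 (i + j))
    (L M N : GMod k A 𝒜) (f : L.M →ₗ[A] M.M) (g : M.M →ₗ[A] N.M)
    (hf : IsGradedMap f) (hg : IsGradedMap g)
    (hinj : Function.Injective f) (hsurj : Function.Surjective g)
    (hexact : LinearMap.range f = LinearMap.ker g)
    (hL : L.gen 0) (hM : M.gen 0) (hN : N.gen 0) :
    ∀ i : ℕ,
      ((Jideal k A 𝒜) ^ i • (⊤ : Submodule A M.M)) ⊓ LinearMap.range f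
        = Submodule.map f ((Jideal k A 𝒜) ^ i • (⊤ : Submodule A L.M)) :=
  stmt4_general k A 𝒜 hgen01 L M f hf hinj hL
end

section
/- If A is a Koszul algebra (i.e., A_0 is a Koszul A-module), then A is quadratic: the kernel of the natural surjection from the tensor algebra T_{A_0}(A_1) onto A is generated as a two-sided ideal by its degree-2 component contained in A_1 ⊗_{A_0} A_1. -/
open DirectSum CategoryTheory

/-- `A₀ = 𝒜 0` is a self-injective algebra: every projective `A₀`-module is injective. -/
def GenK.SelfInjectiveDegZero (k A : Type) [Field k] [Ring A] [Algebra k A]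
    (𝒜 : ℕ → Submodule k A) [GradedAlgebra 𝒜] : Prop :=
  ∀ (V : Type) [AddCommGroup V] [Module (𝒜 0) V],
    Module.Projective (𝒜 0) V → Module.Injective (𝒜 0) V

/-- `Z` is (a copy of) the graded `A`-module `A₀ = A/J`, concentrated in degree `0`. -/
def GenK.IsDegZeroPart {k A : Type} [Field k] [Ring A] [Algebra k A]
    {𝒜 : ℕ → Submodule k A} [GradedAlgebra 𝒜] (Z : GenK.GMod k A 𝒜) : Prop :=
  ∃ q : A →ₗ[A] Z.M, Function.Surjective q ∧ LinearMap.ker q = GenK.Jideal k A 𝒜 ∧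
    ∀ j, j ≠ 0 → Z.gr j = ⊥

/-!
Minimality of the resolution of `A₀ = A ⧸ J` makes `P₀ ≅ A` (a surjection `A → P₀` splits with
kernel `A e` for an idempotent `e ∈ J`, and `J` has no nonzero idempotents), so the first syzygy
is `J`. The `A`-module `T₊ ⧸ (ker q) T₁` maps onto `J` by `x ↦ q x`, and projectivity of `P₁`
lifts `ι₀ ∘ p₁` to `σ : P₁ → T₊ ⧸ (ker q) T₁`.

Homogeneous `z ∈ ker q` of degree `n ≥ 3` lie in the ideal `I` generated by `(ker q)₂`, by
induction on `n`: writing `z ∈ T_{n-1} T₁` gives `y ∈ (P₁)ₙ ∩ ker p₁` with `σ y = z` in degree `n`.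
As `ker p₁ = p₂ P₂` is generated in degree `2`, `y` is a combination of `A_{n-2} (ker p₁)₂`, whose
`σ`-images are, in degree `n`, in `T (ker q)₂ ⊆ I`. The difference lies in `(ker q) T₁`, whose
degree-`n` part is `(ker q)_{n-1} T₁ ⊆ I` by induction.
-/

namespace GenK

section Decompose

variable {k M N : Type} [Field k] [AddCommGroup M] [Module k M] [AddCommGroup N] [Module k N]
  (ℳ : ℕ → Submodule k M) [Decomposition ℳ] (𝒩 : ℕ → Submodule k N) [Decomposition 𝒩]

theorem coe_decompose_map_of_shift (f : M →ₗ[k] N) (s : ℕ)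
    (hf : ∀ j, ∀ x ∈ ℳ j, f x ∈ 𝒩 (j + s)) (m : M) (n : ℕ) :
    (decompose 𝒩 (f m) n : N) = if s ≤ n then f (decompose ℳ m (n - s)) else 0 := by
  induction m using Decomposition.inductionOn ℳ with
  | zero => simp
  | @homogeneous i x =>
    by_cases hn : n = i + s
    · subst hn
      rw [decompose_of_mem_same 𝒩 (hf i x x.2), if_pos (Nat.le_add_left s i), Nat.add_sub_cancel,
        decompose_of_mem_same ℳ x.2]
    · rw [decompose_of_mem_ne 𝒩 (hf i x x.2) (Ne.symm hn)]
      split_ifs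
      · rw [decompose_of_mem_ne ℳ x.2 (by omega), map_zero]
      · rfl
  | add m m' hm hm' =>
    simp only [map_add, decompose_add, DirectSum.add_apply, Submodule.coe_add, hm, hm']
    split_ifs <;> simp

theorem coe_decompose_map (f : M →ₗ[k] N) (hf : ∀ j, ∀ x ∈ ℳ j, f x ∈ 𝒩 j) (m : M) (n : ℕ) :
    (decompose 𝒩 (f m) n : N) = f (decompose ℳ m n) := by
  simpa using coe_decompose_map_of_shift ℳ 𝒩 f 0 (by simpa using hf) m n

theorem map_coe_decompose_of_mem {f : M →ₗ[k] N} (hf : ∀ j, ∀ x ∈ ℳ j, f x ∈ 𝒩 j) {m : M}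
    {n : ℕ} (h : f m ∈ 𝒩 n) : f (decompose ℳ m n) = f m := by
  rw [← coe_decompose_map ℳ 𝒩 f hf, decompose_of_mem_same 𝒩 h]

theorem coe_decompose_zero_of_forall_ne_zero (h : ∀ j, j ≠ 0 → ℳ j = ⊥) (m : M) :
    (decompose ℳ m 0 : M) = m := by
  classical
  conv_rhs => rw [← sum_support_decompose ℳ m]
  refine (Finset.sum_eq_single (f := fun j => (decompose ℳ m j : M)) 0
    (fun j _ hj => ?_) fun h0 => ?_).symm
  · exact (Submodule.mem_bot k).mp (h j hj ▸ (decompose ℳ m j).2)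
  · rw [DFinsupp.notMem_support_iff.mp h0, ZeroMemClass.coe_zero]

end Decompose

section Jideal

variable {k A : Type} [Field k] [Ring A] [Algebra k A] {𝒜 : ℕ → Submodule k A} [GradedAlgebra 𝒜]

theorem Jideal_eq_irrelevant : Jideal k A 𝒜 = (HomogeneousIdeal.irrelevant 𝒜).toIdeal := by
  rw [HomogeneousIdeal.irrelevant_eq_span]
  refine congrArg Ideal.span (Set.ext fun x => ?_)
  simp only [Set.mem_iUnion, SetLike.mem_coe, exists_prop]
  exact ⟨fun ⟨i, hx⟩ => ⟨i + 1, i.succ_pos, hx⟩,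
    fun ⟨i, hi, hx⟩ => ⟨i - 1, by rwa [Nat.sub_add_cancel hi]⟩⟩

theorem mem_Jideal_iff {a : A} : a ∈ Jideal k A 𝒜 ↔ (decompose 𝒜 a 0 : A) = 0 := by
  rw [Jideal_eq_irrelevant]
  rfl

theorem eq_zero_of_isIdempotentElem_of_mem_Jideal {e : A} (he : IsIdempotentElem e)
    (hJ : e ∈ Jideal k A 𝒜) : e = 0 := by
  classical
  -- `eₙ = (e · e)ₙ = ∑ⱼ eₙ₋ⱼ eⱼ`, where `e₀ = 0` and `eₙ₋ⱼ = 0` for `j > 0` by induction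
  have hcomp (n : ℕ) : (decompose 𝒜 e n : A) = 0 := by
    induction n using Nat.strong_induction_on with
    | _ n ih =>
      have hee : e = e * ∑ j ∈ (decompose 𝒜 e).support, (decompose 𝒜 e j : A) := by
        rw [sum_support_decompose, he.eq]
      rw [hee, Finset.mul_sum, decompose_sum, DFinsupp.finsetSum_apply, Submodule.coe_sum]
      refine Finset.sum_eq_zero fun j _ => ?_
      rw [coe_decompose_mul_of_right_mem 𝒜 n (decompose 𝒜 e j).2]
      split_ifs
      · rcases Nat.eq_zero_or_pos j with rfl | hj
        · rw [mem_Jideal_iff.mp hJ, mul_zero]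
        · rw [ih (n - j) (by omega), zero_mul]
      · rfl
  rw [← sum_support_decompose 𝒜 e]
  exact Finset.sum_eq_zero fun n _ => hcomp n

end Jideal

section DegZero

variable (k A : Type) [Field k] [Ring A] [Algebra k A] (𝒜 : ℕ → Submodule k A)

noncomputable def degZeroGr : ℕ → Submodule k (A ⧸ Jideal k A 𝒜) := fun j => if j = 0 then ⊤ else ⊥

theorem isInternal_degZeroGr : IsInternal (degZeroGr k A 𝒜) := by
  have hz (j : ℕ) (hj : degZeroGr k A 𝒜 j ≠ ⊥) : j = 0 := by_contra fun h => hj (if_neg h)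
  have : Subsingleton {j // degZeroGr k A 𝒜 j ≠ ⊥} :=
    ⟨fun ⟨i, hi⟩ ⟨j, hj⟩ => Subtype.ext ((hz i hi).trans (hz j hj).symm)⟩
  refine (isInternal_submodule_iff_iSupIndep_and_iSup_eq_top _).mpr
    ⟨iSupIndep_ne_bot.mp (iSupIndep_subsingleton _), eq_top_iff.mpr (le_iSup_of_le 0 ?_)⟩
  simp [degZeroGr]

variable [GradedAlgebra 𝒜]

noncomputable def degZeroGMod (h0 : FiniteDimensional k (𝒜 0)) : GMod k A 𝒜 where
  M := A ⧸ Jideal k A 𝒜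
  gr := degZeroGr k A 𝒜
  decomp := (isInternal_degZeroGr k A 𝒜).chooseDecomposition
  gsmul := ⟨fun {i j a x} ha hx => by
    by_cases hj : j = 0
    · subst hj
      by_cases hi : i = 0
      · simp [degZeroGr, hi]
      · obtain ⟨x, rfl⟩ := Submodule.Quotient.mk_surjective _ x
        have : a * x ∈ Jideal k A 𝒜 := mem_Jideal_iff.mpr
          (coe_decompose_mul_of_left_mem_of_not_le 𝒜 ha (by omega))
        simp [degZeroGr, hi, ← Submodule.Quotient.mk_smul,
          (Submodule.Quotient.mk_eq_zero _).mpr this]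
    · simp_all [degZeroGr]⟩
  locFin _ := by
    have : FiniteDimensional k (A ⧸ Jideal k A 𝒜) := by
      refine FiniteDimensional.of_surjective
        (((Jideal k A 𝒜).mkQ.restrictScalars k).comp (𝒜 0).subtype) fun x => ?_
      obtain ⟨a, rfl⟩ := Submodule.Quotient.mk_surjective _ x
      refine ⟨⟨_, (decompose 𝒜 a 0).2⟩, (Submodule.Quotient.eq _).mpr (mem_Jideal_iff.mpr ?_)⟩
      simp
    infer_instance

theorem isDegZeroPart_degZeroGMod (h0 : FiniteDimensional k (𝒜 0)) :
    IsDegZeroPart (degZeroGMod k A 𝒜 h0) :=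
  ⟨(Jideal k A 𝒜).mkQ, Submodule.mkQ_surjective _, Submodule.ker_mkQ _,
    fun _ hj => if_neg hj⟩

end DegZero

section GMod

variable {k A : Type} [Field k] [Ring A] [Algebra k A] {𝒜 : ℕ → Submodule k A} [GradedAlgebra 𝒜]

theorem GMod.coe_decompose_smul_of_mem (N : GMod k A 𝒜) {d : ℕ} {a : A} (ha : a ∈ 𝒜 d)
    (m : N.M) (n : ℕ) :
    (decompose N.gr (a • m) n : N.M) = if d ≤ n then a • (decompose N.gr m (n - d) : N.M) else 0 :=
  coe_decompose_map_of_shift N.gr N.gr (DistribSMul.toLinearMap k N.M a) d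
    (fun j _ hx => add_comm d j ▸ SetLike.GradedSMul.smul_mem ha hx) m n

theorem GMod.coe_decompose_mem_span_of_gen (N : GMod k A 𝒜) {s : ℕ} (hN : N.gen s) (m : N.M)
    (d : ℕ) : (decompose N.gr m (d + s) : N.M) ∈
      Submodule.span k {x | ∃ a ∈ 𝒜 d, ∃ y ∈ N.gr s, x = a • y} := by
  classical
  let V (n : ℕ) : Submodule k N.M :=
    Submodule.span k {x | ∃ d, d + s = n ∧ ∃ a ∈ 𝒜 d, ∃ y ∈ N.gr s, x = a • y}
  suffices key : ∀ n, (decompose N.gr m n : N.M) ∈ V n by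
    refine Submodule.span_mono ?_ (key (d + s))
    rintro _ ⟨d', hd', a, ha, y, hy, rfl⟩
    exact ⟨a, (by omega : d' = d) ▸ ha, y, hy, rfl⟩
  have hm : m ∈ Submodule.span A (N.gr s : Set N.M) := hN ▸ Submodule.mem_top
  induction hm using Submodule.span_induction with
  | mem y hy =>
    intro n
    by_cases hn : s = n
    · subst hn
      rw [decompose_of_mem_same _ hy]
      exact Submodule.subset_span
        ⟨0, zero_add s, 1, SetLike.GradedOne.one_mem, y, hy, (one_smul A y).symm⟩
    · rw [decompose_of_mem_ne _ hy hn]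
      exact zero_mem _
  | zero => simp
  | add x y _ _ hx hy => intro n; simpa using add_mem (hx n) (hy n)
  | smul a x _ hx =>
    intro n
    rw [← sum_support_decompose 𝒜 a, Finset.sum_smul, decompose_sum, DFinsupp.finsetSum_apply,
      Submodule.coe_sum]
    refine sum_mem fun i _ => ?_
    rw [N.coe_decompose_smul_of_mem (decompose 𝒜 a i).2]
    split_ifs with hi
    · refine Submodule.span_le.mpr ?_ (Submodule.apply_mem_span_image_of_mem_span
        (DistribSMul.toLinearMap k N.M (decompose 𝒜 a i : A)) (hx (n - i)))
      rintro _ ⟨_, ⟨d, hd, b, hb, y, hy, rfl⟩, rfl⟩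
      exact Submodule.subset_span ⟨i + d, by omega, _ * b,
        SetLike.GradedMul.mul_mem (decompose 𝒜 a i).2 hb, y, hy, (mul_smul _ _ _).symm⟩
    · exact zero_mem _

theorem GMod.mem_span_smul_apply_of_gen {M N : GMod k A 𝒜} {s : ℕ} (hM : M.gen s)
    (f : M.M →ₗ[A] N.M) (hf : ∀ j, ∀ x ∈ M.gr j, f x ∈ N.gr j) {y : N.M}
    (hy : y ∈ LinearMap.range f) {d : ℕ} (hyd : y ∈ N.gr (d + s)) :
    y ∈ Submodule.span k {x | ∃ a ∈ 𝒜 d, ∃ w ∈ M.gr s, x = a • f w} := by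
  obtain ⟨x, rfl⟩ := hy
  rw [← show f (decompose M.gr x (d + s)) = f x from
    map_coe_decompose_of_mem M.gr N.gr (f := f.restrictScalars k) hf hyd]
  refine Submodule.span_mono ?_ (Submodule.apply_mem_span_image_of_mem_span
    (f.restrictScalars k) (M.coe_decompose_mem_span_of_gen hM x d))
  rintro _ ⟨_, ⟨a, ha, w, hw, rfl⟩, rfl⟩
  exact ⟨a, ha, w, hw, map_smul f a w⟩

end GMod

theorem injective_of_surjective_of_projective {R P : Type} [Ring R] [AddCommGroup P] [Module R P]
    [Module.Projective R P] {g : R →ₗ[R] P} (hg : Function.Surjective g)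
    (hidem : ∀ e, IsIdempotentElem e → g e = 0 → e = 0) : Function.Injective g := by
  obtain ⟨s, hs⟩ := Module.projective_lifting_property g LinearMap.id hg
  have hgs (y : P) : g (s y) = y := LinearMap.congr_fun hs y
  have hsg (a : R) : s (g a) = a * s (g 1) := by
    rw [show g a = a • g 1 by rw [← map_smul, smul_eq_mul, mul_one], map_smul, smul_eq_mul]
  -- `ker g = R e` for the idempotent `e = 1 - s (g 1)`
  set e := 1 - s (g 1)
  have hge : g e = 0 := by rw [map_sub, hgs, sub_self]
  have hker (a : R) (ha : g a = 0) : a = a * e := by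
    rw [mul_sub, mul_one, ← hsg, ha, map_zero, sub_zero]
  have he : e = 0 := hidem e (hker e hge).symm hge
  refine (injective_iff_map_eq_zero g).mpr fun a ha => ?_
  rw [hker a ha, he, mul_zero]

section Tower

variable {k A : Type} [Field k] [Ring A] [Algebra k A] {𝒜 : ℕ → Submodule k A} [GradedAlgebra 𝒜]
  {Z : GMod k A 𝒜} (TW : SyzTower Z)

theorem SyzTower.ι_mem_gr {i j : ℕ} {x : (TW.N (i + 1)).M} (hx : x ∈ (TW.N (i + 1)).gr j) :
    TW.ι i x ∈ (TW.P i).gr j := by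
  rw [TW.gr_eq] at hx
  exact hx

theorem SyzTower.mem_span_smul_of_p_eq_zero (h2 : (TW.P 2).gen 2) {y : (TW.P 1).M}
    (hy : TW.p 1 y = 0) {d : ℕ} (hyd : y ∈ (TW.P 1).gr (d + 2)) :
    y ∈ Submodule.span k {x | ∃ a ∈ 𝒜 d, ∃ w, TW.p 1 w = 0 ∧ x = a • w} := by
  have hrange : LinearMap.range (TW.ι 1 ∘ₗ TW.p 2) = LinearMap.ker (TW.p 1) := by
    rw [LinearMap.range_comp, LinearMap.range_eq_top.mpr (TW.surj 2), Submodule.map_top, TW.rng]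
  refine Submodule.span_mono ?_ (GMod.mem_span_smul_apply_of_gen h2 (TW.ι 1 ∘ₗ TW.p 2)
    (fun j x hx => TW.ι_mem_gr (TW.graded 2 j x hx)) (hrange ▸ LinearMap.mem_ker.mpr hy) hyd)
  rintro _ ⟨a, ha, w, -, rfl⟩
  exact ⟨a, ha, _, (LinearMap.mem_ker.mp (hrange ▸ LinearMap.mem_range_self _ w)), rfl⟩

theorem SyzTower.exists_mem_gr_ι_p_eq {x : (TW.P 0).M} (hx : x ∈ LinearMap.range (TW.ι 0)) {j : ℕ}
    (hxj : x ∈ (TW.P 0).gr j) : ∃ y ∈ (TW.P 1).gr j, TW.ι 0 (TW.p 1 y) = x := by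
  obtain ⟨n, rfl⟩ := hx
  obtain ⟨y, hy⟩ := TW.surj 1 (decompose (TW.N 1).gr n j)
  refine ⟨decompose (TW.P 1).gr y j, (decompose _ y j).2, ?_⟩
  rw [show TW.p 1 (decompose (TW.P 1).gr y j) = TW.p 1 y from
    map_coe_decompose_of_mem _ _ (f := (TW.p 1).restrictScalars k) (TW.graded 1)
      (hy ▸ (decompose _ n j).2), hy]
  exact map_coe_decompose_of_mem _ _ (f := (TW.ι 0).restrictScalars k)
    (fun _ _ => TW.ι_mem_gr) hxj

theorem SyzTower.exists_injective_graded_of_isDegZeroPart (hZ : IsDegZeroPart Z) :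
    ∃ g : A →ₗ[A] (TW.P 0).M, Function.Injective g ∧ (∀ j, ∀ a ∈ 𝒜 j, g a ∈ (TW.P 0).gr j) ∧
      Submodule.map g (Jideal k A 𝒜) = LinearMap.range (TW.ι 0) := by
  obtain ⟨q₀, hq₀, hker, hconc⟩ := TW.zero ▸ hZ
  obtain ⟨w, hw⟩ := TW.surj 0 (q₀ 1)
  set u := (decompose (TW.P 0).gr w 0 : (TW.P 0).M)
  have hpu : TW.p 0 u = q₀ 1 := by
    rw [← LinearMap.restrictScalars_apply (R := k), ← coe_decompose_map _ _ _ (TW.graded 0)]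
    simp [hw, coe_decompose_zero_of_forall_ne_zero (TW.N 0).gr hconc]
  let g := LinearMap.toSpanSingleton A _ u
  have hpg : TW.p 0 ∘ₗ g = q₀ := by ext; simp [g, hpu]
  have hg : Function.Surjective g := by
    refine LinearMap.range_eq_top.mp (TW.small 0 _ (eq_top_iff.mpr fun y _ => ?_))
    obtain ⟨a, ha⟩ := hq₀ (TW.p 0 y)
    refine Submodule.mem_sup.mpr ⟨g a, LinearMap.mem_range_self g a, y - g a, ?_, by abel⟩
    rw [LinearMap.mem_ker, map_sub, ← LinearMap.comp_apply, hpg, ha, sub_self]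
  have : Module.Projective A (TW.P 0).M := TW.proj 0
  refine ⟨g, injective_of_surjective_of_projective hg fun e he hge => ?_, fun j a ha => ?_, ?_⟩
  · refine eq_zero_of_isIdempotentElem_of_mem_Jideal (𝒜 := 𝒜) he ?_
    rw [← hker, LinearMap.mem_ker, ← hpg, LinearMap.comp_apply, hge, map_zero]
  · exact SetLike.GradedSMul.smul_mem ha (decompose (TW.P 0).gr w 0).2
  · rw [← hker, ← hpg, LinearMap.ker_comp, Submodule.map_comap_eq, LinearMap.range_eq_top.mpr hg,
      top_inf_eq, TW.rng]

end Tower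

section Presentation

variable {k A : Type} [Field k] [Ring A] [Algebra k A] {𝒜 : ℕ → Submodule k A}
  {T : Type} [Ring T] [Algebra k T] (𝒯 : ℕ → Submodule k T) (q : T →ₐ[k] A)

def degPos : Submodule T T := Submodule.span T (𝒯 1)

def kerMulDegOne : Submodule T T :=
  Submodule.span T {y | ∃ r v, q r = 0 ∧ v ∈ 𝒯 1 ∧ y = r * v}

/-- `T₊ ⧸ (ker q) T₁`; when `T` is the tensor algebra of `A₁` this is `A ⊗_{A₀} A₁`. -/
abbrev PosQuot : Type := degPos 𝒯 ⧸ (kerMulDegOne 𝒯 q).comap (degPos 𝒯).subtype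

variable {𝒯 q}

theorem mem_degPos_of_mem (hTmul : ∀ i j, 𝒯 i * 𝒯 j = 𝒯 (i + j)) {n : ℕ} {x : T}
    (hx : x ∈ 𝒯 (n + 1)) : x ∈ degPos 𝒯 := by
  rw [← hTmul] at hx
  refine Submodule.mul_induction_on hx (fun t _ v hv => ?_) (fun _ _ => add_mem)
  exact Submodule.smul_mem _ t (Submodule.subset_span hv)

theorem mul_mem_kerMulDegOne {r x : T} (hr : q r = 0) (hx : x ∈ degPos 𝒯) :
    r * x ∈ kerMulDegOne 𝒯 q := by
  induction hx using Submodule.span_induction generalizing r with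
  | mem v hv => exact Submodule.subset_span ⟨r, v, hr, hv, rfl⟩
  | zero => simp
  | add x y _ _ hx hy => rw [mul_add]; exact add_mem (hx hr) (hy hr)
  | smul t x _ hx => rw [smul_eq_mul, ← mul_assoc]; exact hx (by rw [map_mul, hr, zero_mul])

theorem apply_eq_zero_of_mem_kerMulDegOne {x : T} (hx : x ∈ kerMulDegOne 𝒯 q) : q x = 0 := by
  induction hx using Submodule.span_induction with
  | mem _ h => obtain ⟨r, v, hr, -, rfl⟩ := h; rw [map_mul, hr, zero_mul]
  | zero => exact map_zero q
  | add x y _ _ hx hy => rw [map_add, hx, hy, add_zero]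
  | smul t x _ hx => rw [smul_eq_mul, map_mul, hx, mul_zero]

theorem smul_eq_smul_of_apply_eq {t t' : T} (h : q t = q t') (ξ : PosQuot 𝒯 q) :
    t • ξ = t' • ξ := by
  obtain ⟨x, rfl⟩ := Submodule.Quotient.mk_surjective _ ξ
  rw [← sub_eq_zero, ← sub_smul, ← Submodule.Quotient.mk_smul, Submodule.Quotient.mk_eq_zero]
  exact mul_mem_kerMulDegOne (by rw [map_sub, h, sub_self]) x.2

/-- Since `q` is onto and `ker q` kills `PosQuot`, the `T`-action descends to `A`. -/
noncomputable abbrev PosQuot.module (hq : Function.Surjective q) : Module A (PosQuot 𝒯 q) :=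
  letI : SMul A (PosQuot 𝒯 q) := ⟨fun a ξ => Function.surjInv hq a • ξ⟩
  hq.moduleLeft q.toRingHom fun _ _ => smul_eq_smul_of_apply_eq (Function.surjInv_eq hq _) _

theorem apply_mem_of_mem (hqgr : ∀ i, (𝒯 i).map q.toLinearMap = 𝒜 i) {i : ℕ} {x : T}
    (hx : x ∈ 𝒯 i) : q x ∈ 𝒜 i :=
  hqgr i ▸ Submodule.mem_map_of_mem hx

variable [GradedAlgebra 𝒜]

theorem exists_lift_to_posQuot (hq : Function.Surjective q)
    (hqgr : ∀ i, (𝒯 i).map q.toLinearMap = 𝒜 i) (hTmul : ∀ i j, 𝒯 i * 𝒯 j = 𝒯 (i + j))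
    {Z : GMod k A 𝒜} (TW : SyzTower Z) (g : A →ₗ[A] (TW.P 0).M)
    (hgJ : LinearMap.range (TW.ι 0) ≤ Submodule.map g (Jideal k A 𝒜)) :
    ∃ σ : (TW.P 1).M →+ PosQuot 𝒯 q, (∀ t y, σ (q t • y) = t • σ y) ∧
      ∀ y, ∃ x : degPos 𝒯, σ y = Submodule.Quotient.mk x ∧ g (q x) = TW.ι 0 (TW.p 1 y) := by
  let _ := PosQuot.module (𝒯 := 𝒯) hq
  let _ : Module T (TW.P 0).M := Module.compHom _ q.toRingHom
  let φT : degPos 𝒯 →ₗ[T] (TW.P 0).M :=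
    { toFun x := g (q x)
      map_add' x y := by simp
      map_smul' t x := by
        simp only [SetLike.val_smul, smul_eq_mul, map_mul, RingHom.id_apply]
        rw [← smul_eq_mul, map_smul]
        rfl }
  let φ' := ((kerMulDegOne 𝒯 q).comap (degPos 𝒯).subtype).liftQ φT fun x hx =>
    show g (q x) = 0 by rw [apply_eq_zero_of_mem_kerMulDegOne (𝒯 := 𝒯) (x := x) hx, map_zero]
  let φ : PosQuot 𝒯 q →ₗ[A] (TW.P 0).M :=
    { toFun := φ'
      map_add' := map_add φ'
      map_smul' a ξ := by
        show φ' (Function.surjInv hq a • ξ) = a • φ' ξ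
        rw [map_smul]
        show q (Function.surjInv hq a) • φ' ξ = _
        rw [Function.surjInv_eq hq] }
  have hφ (x : degPos 𝒯) : φ (Submodule.Quotient.mk x) = g (q x) := rfl
  have hJ : Jideal k A 𝒜 ≤ (LinearMap.range φ).comap g := by
    refine Submodule.span_le.mpr (Set.iUnion_subset fun i a ha => ?_)
    obtain ⟨t, ht, rfl⟩ := (hqgr (i + 1)).symm ▸ ha
    exact ⟨_, hφ ⟨t, mem_degPos_of_mem hTmul ht⟩⟩
  have hrange (y : (TW.P 1).M) : TW.ι 0 (TW.p 1 y) ∈ LinearMap.range φ := by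
    obtain ⟨a, ha, hay⟩ := hgJ (LinearMap.mem_range_self _ _)
    exact hay ▸ hJ ha
  have : Module.Projective A (TW.P 1).M := TW.proj 1
  obtain ⟨σ, hσ⟩ := Module.projective_lifting_property φ.rangeRestrict
    ((TW.ι 0 ∘ₗ TW.p 1).codRestrict _ hrange) φ.surjective_rangeRestrict
  refine ⟨σ.toAddMonoidHom, fun t y => ?_, fun y => ?_⟩
  · show σ (q t • y) = t • σ y
    rw [map_smul]
    exact smul_eq_smul_of_apply_eq (Function.surjInv_eq hq _) _
  · obtain ⟨x, hx⟩ := Submodule.Quotient.mk_surjective _ (σ y)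
    refine ⟨x, hx.symm, ?_⟩
    rw [← hφ, hx]
    exact congrArg Subtype.val (LinearMap.congr_fun hσ y)

variable [GradedAlgebra 𝒯]

theorem coe_decompose_apply (hqgr : ∀ i, (𝒯 i).map q.toLinearMap = 𝒜 i) (x : T) (n : ℕ) :
    (decompose 𝒜 (q x) n : A) = q (decompose 𝒯 x n) :=
  coe_decompose_map 𝒯 𝒜 q.toLinearMap (fun _ _ => apply_mem_of_mem hqgr) x n

theorem coe_decompose_mem_of_mem_kerMulDegOne (hqgr : ∀ i, (𝒯 i).map q.toLinearMap = 𝒜 i)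
    (I : TwoSidedIdeal T) {n : ℕ} (hI : ∀ j < n, ∀ r ∈ 𝒯 j, q r = 0 → r ∈ I) {x : T}
    (hx : x ∈ kerMulDegOne 𝒯 q) {j : ℕ} (hj : j ≤ n) : (decompose 𝒯 x j : T) ∈ I := by
  classical
  induction hx using Submodule.span_induction generalizing j with
  | mem _ h =>
    obtain ⟨r, v, hr, hv, rfl⟩ := h
    rw [coe_decompose_mul_of_right_mem 𝒯 j hv]
    split_ifs
    · refine I.mul_mem_right _ _ (hI _ (by omega) _ (decompose 𝒯 r _).2 ?_)
      simp [← coe_decompose_apply hqgr, hr]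
    · exact zero_mem I
  | zero => simp
  | add x y _ _ hx hy => simpa using add_mem (hx hj) (hy hj)
  | smul t x _ hx =>
    rw [smul_eq_mul, ← sum_support_decompose 𝒯 t, Finset.sum_mul, decompose_sum,
      DFinsupp.finsetSum_apply, Submodule.coe_sum]
    refine sum_mem fun i _ => ?_
    rw [coe_decompose_mul_of_left_mem 𝒯 j (decompose 𝒯 t i).2]
    split_ifs
    · exact I.mul_mem_left _ _ (hx (by omega))
    · exact zero_mem I

theorem coe_decompose_one_eq_of_apply_eq (hqgr : ∀ i, (𝒯 i).map q.toLinearMap = 𝒜 i)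
    (hq1 : ∀ x ∈ 𝒯 1, q x = 0 → x = 0) {x v : T} (hv : v ∈ 𝒯 1) (h : q x = q v) :
    (decompose 𝒯 x 1 : T) = v := by
  refine sub_eq_zero.mp (hq1 _ (sub_mem (decompose 𝒯 x 1).2 hv) ?_)
  rw [map_sub, ← coe_decompose_apply hqgr, h, coe_decompose_apply hqgr,
    decompose_of_mem_same 𝒯 hv, sub_self]

theorem mem_of_forall_mem_gr (hqgr : ∀ i, (𝒯 i).map q.toLinearMap = 𝒜 i) (I : TwoSidedIdeal T)
    (h : ∀ n, ∀ z ∈ 𝒯 n, q z = 0 → (∀ j < n, ∀ r ∈ 𝒯 j, q r = 0 → r ∈ I) → z ∈ I) {x : T}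
    (hx : q x = 0) : x ∈ I := by
  classical
  have hgr (n : ℕ) : ∀ z ∈ 𝒯 n, q z = 0 → z ∈ I := by
    induction n using Nat.strong_induction_on with
    | _ n ih => exact fun z hz hqz => h n z hz hqz ih
  rw [← sum_support_decompose 𝒯 x]
  refine sum_mem fun n _ => hgr n _ (decompose 𝒯 x n).2 ?_
  rw [← coe_decompose_apply hqgr, hx, decompose_zero, DirectSum.zero_apply, ZeroMemClass.coe_zero]

section Lift

variable {Z : GMod k A 𝒜} {TW : SyzTower Z} {g : A →ₗ[A] (TW.P 0).M}
  {σ : (TW.P 1).M →+ PosQuot 𝒯 q}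

theorem exists_lift_of_mem_gr_succ (hqgr : ∀ i, (𝒯 i).map q.toLinearMap = 𝒜 i)
    (hTmul : ∀ i j, 𝒯 i * 𝒯 j = 𝒯 (i + j)) (hq1 : ∀ x ∈ 𝒯 1, q x = 0 → x = 0)
    (hg : Function.Injective g) (hg_gr : ∀ j, ∀ a ∈ 𝒜 j, g a ∈ (TW.P 0).gr j)
    (hgJ : Submodule.map g (Jideal k A 𝒜) ≤ LinearMap.range (TW.ι 0))
    (hσ_smul : ∀ t y, σ (q t • y) = t • σ y)
    (hσ : ∀ y, ∃ x : degPos 𝒯, σ y = Submodule.Quotient.mk x ∧ g (q x) = TW.ι 0 (TW.p 1 y))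
    {m : ℕ} {z : T} (hz : z ∈ 𝒯 (m + 1)) :
    ∃ y ∈ (TW.P 1).gr (m + 1), ∃ x : degPos 𝒯, TW.ι 0 (TW.p 1 y) = g (q z) ∧
      σ y = Submodule.Quotient.mk x ∧ (decompose 𝒯 x (m + 1) : T) = z := by
  rw [← hTmul] at hz
  refine Submodule.mul_induction_on hz (fun t ht v hv => ?_) fun z z' hz hz' => ?_
  · have hqv : q v ∈ 𝒜 1 := apply_mem_of_mem hqgr hv
    have hqvJ : q v ∈ Jideal k A 𝒜 :=
      mem_Jideal_iff.mpr (decompose_of_mem_ne 𝒜 hqv one_ne_zero)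
    obtain ⟨y, hy, hyv⟩ := TW.exists_mem_gr_ι_p_eq (hgJ ⟨_, hqvJ, rfl⟩) (hg_gr 1 _ hqv)
    obtain ⟨x, hσx, hx⟩ := hσ y
    refine ⟨q t • y, SetLike.GradedSMul.smul_mem (apply_mem_of_mem hqgr ht) hy, t • x, ?_, ?_, ?_⟩
    · rw [map_smul, map_smul, hyv, ← map_smul, smul_eq_mul, map_mul q]
    · rw [hσ_smul, hσx, Submodule.Quotient.mk_smul]
    · rw [SetLike.val_smul, smul_eq_mul, coe_decompose_mul_of_left_mem_of_le 𝒯 ht (by omega),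
        Nat.add_sub_cancel_left, coe_decompose_one_eq_of_apply_eq hqgr hq1 hv (hg (hx.trans hyv))]
  · obtain ⟨y, hy, x, hyz, hσy, hxz⟩ := hz
    obtain ⟨y', hy', x', hyz', hσy', hxz'⟩ := hz'
    refine ⟨y + y', add_mem hy hy', x + x', ?_, ?_, ?_⟩
    · simp [hyz, hyz']
    · rw [map_add, hσy, hσy', Submodule.Quotient.mk_add]
    · simp [hxz, hxz']

theorem exists_lift_of_mem_span_smul (hqgr : ∀ i, (𝒯 i).map q.toLinearMap = 𝒜 i)
    (I : TwoSidedIdeal T) (hI : ∀ r ∈ 𝒯 2, q r = 0 → r ∈ I) (hg : Function.Injective g)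
    (hσ_smul : ∀ t y, σ (q t • y) = t • σ y)
    (hσ : ∀ y, ∃ x : degPos 𝒯, σ y = Submodule.Quotient.mk x ∧ g (q x) = TW.ι 0 (TW.p 1 y))
    {d : ℕ} {y : (TW.P 1).M}
    (hy : y ∈ Submodule.span k {x | ∃ a ∈ 𝒜 d, ∃ w, TW.p 1 w = 0 ∧ x = a • w}) :
    ∃ x : degPos 𝒯, σ y = Submodule.Quotient.mk x ∧ (decompose 𝒯 x (d + 2) : T) ∈ I := by
  induction hy using Submodule.span_induction with
  | mem _ h =>
    obtain ⟨a, ha, w, hw, rfl⟩ := h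
    obtain ⟨t, ht, rfl⟩ := (hqgr d).symm ▸ ha
    obtain ⟨u, hσu, hu⟩ := hσ w
    have hqu : q u = 0 := hg (by rw [hu, hw, map_zero, map_zero])
    refine ⟨t • u, ?_, ?_⟩
    · rw [AlgHom.toLinearMap_apply, hσ_smul, hσu, Submodule.Quotient.mk_smul]
    · rw [SetLike.val_smul, smul_eq_mul, coe_decompose_mul_of_left_mem_of_le 𝒯 ht (by omega),
        Nat.add_sub_cancel_left]
      refine I.mul_mem_left _ _ (hI _ (decompose 𝒯 _ 2).2 ?_)
      simp [← coe_decompose_apply hqgr, hqu]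
  | zero => exact ⟨0, by simp, by simp⟩
  | add y y' _ _ hy hy' =>
    obtain ⟨x, hσx, hx⟩ := hy
    obtain ⟨x', hσx', hx'⟩ := hy'
    refine ⟨x + x', by rw [map_add, hσx, hσx', Submodule.Quotient.mk_add], ?_⟩
    simpa using add_mem hx hx'
  | smul c y _ hy =>
    obtain ⟨x, hσx, hx⟩ := hy
    refine ⟨algebraMap k T c • x, ?_, ?_⟩
    · rw [← algebraMap_smul A c y, ← AlgHom.commutes q, hσ_smul, hσx, Submodule.Quotient.mk_smul]
    · rw [SetLike.val_smul, smul_eq_mul, ← Algebra.smul_def, decompose_smul,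
        DirectSum.smul_apply, SetLike.val_smul, Algebra.smul_def]
      exact I.mul_mem_left _ _ hx

theorem mem_of_mem_gr_of_apply_eq_zero (hqgr : ∀ i, (𝒯 i).map q.toLinearMap = 𝒜 i)
    (hTmul : ∀ i j, 𝒯 i * 𝒯 j = 𝒯 (i + j)) (hq1 : ∀ x ∈ 𝒯 1, q x = 0 → x = 0)
    (h2 : (TW.P 2).gen 2) (hg : Function.Injective g)
    (hg_gr : ∀ j, ∀ a ∈ 𝒜 j, g a ∈ (TW.P 0).gr j)
    (hgJ : Submodule.map g (Jideal k A 𝒜) ≤ LinearMap.range (TW.ι 0))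
    (hσ_smul : ∀ t y, σ (q t • y) = t • σ y)
    (hσ : ∀ y, ∃ x : degPos 𝒯, σ y = Submodule.Quotient.mk x ∧ g (q x) = TW.ι 0 (TW.p 1 y))
    (I : TwoSidedIdeal T) {m : ℕ} (hI : ∀ j < m + 3, ∀ r ∈ 𝒯 j, q r = 0 → r ∈ I) {z : T}
    (hz : z ∈ 𝒯 (m + 3)) (hqz : q z = 0) : z ∈ I := by
  obtain ⟨y, hy, x, hyz, hσy, hxz⟩ :=
    exists_lift_of_mem_gr_succ hqgr hTmul hq1 hg hg_gr hgJ hσ_smul hσ hz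
  have hpy : TW.p 1 y = 0 := TW.inj 0 (by rw [hyz, hqz, map_zero, map_zero])
  obtain ⟨x', hσx', hx'⟩ := exists_lift_of_mem_span_smul hqgr I (hI 2 (by omega)) hg hσ_smul hσ
    (TW.mem_span_smul_of_p_eq_zero h2 hpy hy)
  -- `x` and `x'` both represent `σ y`: in degree `m + 3` the first is `z`, the second lies in `I`
  have hxx' : x - x' ∈ (kerMulDegOne 𝒯 q).comap (degPos 𝒯).subtype :=
    (Submodule.Quotient.eq _).mp (hσy.symm.trans hσx')
  have := coe_decompose_mem_of_mem_kerMulDegOne hqgr I hI hxx' le_rfl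
  rw [Submodule.subtype_apply, Submodule.coe_sub, decompose_sub, DirectSum.sub_apply,
    Submodule.coe_sub, hxz] at this
  simpa using add_mem this hx'

end Lift

end Presentation

end GenK

open GenK in
theorem stmt15 (k A : Type) [Field k] [Ring A] [Algebra k A] (𝒜 : ℕ → Submodule k A)
    [GradedAlgebra 𝒜]
    (hloc : ∀ i, FiniteDimensional k (𝒜 i))
    (hKoszul : ∀ Z : GMod k A 𝒜, IsDegZeroPart Z → IsKoszul Z)
    (T : Type) [Ring T] [Algebra k T] (𝒯 : ℕ → Submodule k T) [GradedAlgebra 𝒯]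
    (hTmul : ∀ i j, 𝒯 i * 𝒯 j = 𝒯 (i + j))
    (q : T →ₐ[k] A)
    (hq : Function.Surjective q)
    (hqgr : ∀ i, (𝒯 i).map q.toLinearMap = 𝒜 i)
    (hq01 : ∀ x ∈ (𝒯 0 ⊔ 𝒯 1 : Submodule k T), q x = 0 → x = 0) :
    ∀ x : T, q x = 0 → x ∈ TwoSidedIdeal.span {y : T | q y = 0 ∧ y ∈ 𝒯 2} := by
  intro x hx
  have hZ := isDegZeroPart_degZeroGMod k A 𝒜 (hloc 0)
  obtain ⟨-, TW, hTW⟩ := hKoszul _ hZ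
  obtain ⟨g, hg, hg_gr, hgJ⟩ := TW.exists_injective_graded_of_isDegZeroPart hZ
  obtain ⟨σ, hσ_smul, hσ⟩ := exists_lift_to_posQuot hq hqgr hTmul TW g hgJ.ge
  have hq1 (v : T) (hv : v ∈ 𝒯 1) : q v = 0 → v = 0 := hq01 v (Submodule.mem_sup_right hv)
  refine mem_of_forall_mem_gr hqgr _ (fun n z hz hqz hI => ?_) hx
  match n, hz with
  | 0, hz => exact hq01 z (Submodule.mem_sup_left hz) hqz ▸ zero_mem _
  | 1, hz => exact hq1 z hz hqz ▸ zero_mem _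
  | 2, hz => exact TwoSidedIdeal.subset_span ⟨hqz, hz⟩
  | _ + 3, hz =>
    exact mem_of_mem_gr_of_apply_eq_zero hqgr hTmul hq1 (hTW 2) hg hg_gr hgJ.le hσ_smul hσ _ hI
      hz hqz
end
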